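/- arXiv:1510.00452 — 5 statements merged into one kernel-verified Lean document; each statement's English description precedes it below -/
import Mathlib

section
/- Constraints from general loss bounds on the ensemble (Theorem 4.1): suppose ε₁,…,ε_p ∈ ℝ and define b_i^ℓ = (1/n)·Σ_{j=1}^n [ℓ₊(h_i(x_j)) + ℓ₋(h_i(x_j))] − 2ε_i for each i. With the feasible set Z^ℓ = {z ∈ [−1,1]ⁿ : ℓ(z, h_i) ≤ ε_i for all i ∈ [p]} assumed nonempty, the minimax value satisfies: min over g ∈ [−1,1]ⁿ of sup over z ∈ Z^ℓ of ℓ(z,g) = (1/2)·inf over σ ∈ ℝᵖ with σ ≥ 0 of [−Σ_{i=1}^p b_i^ℓ·σ_i + (1/n)·Σ_{j=1}^n Ψ(Σ_{i=1}^p σ_i·Γ(h_i(x_j)))]. -/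
open scoped BigOperators

noncomputable def Psi (lp lm Γinv : ℝ → ℝ) (m : ℝ) : ℝ :=
  if m ≤ lm (-1) - lp (-1) then -m + 2 * lm (-1)
  else if m < lm 1 - lp 1 then lp (Γinv m) + lm (Γinv m)
  else m + 2 * lp 1

noncomputable def lossV (lp lm : ℝ → ℝ) (n : ℕ) (z g : Fin n → ℝ) : ℝ :=
  (1 / (n : ℝ)) * ∑ j, ((1 + z j) / 2 * lp (g j) + (1 - z j) / 2 * lm (g j))

/-!
For fixed `g`, the loss `lossV z g` and the constraints `lossV z (F i) ≤ eps i` are affine in `z`,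
so the inner supremum is a linear program over the cube `[-1, 1]ⁿ`. For multipliers `σ ≥ 0` the
Lagrangian `2 ℓ(z, g) + ∑ᵢ σᵢ (2 εᵢ - 2 ℓ(z, hᵢ))` equals
`-∑ᵢ bᵢ σᵢ + (1/n) ∑ⱼ (ℓ₊(gⱼ) + ℓ₋(gⱼ) + (mⱼ - Γ(gⱼ)) zⱼ)` with `mⱼ = ∑ᵢ σᵢ Γ(hᵢ(xⱼ))`.
Maximising over the cube turns `(mⱼ - Γ(gⱼ)) zⱼ` into `|mⱼ - Γ(gⱼ)|`, and the minimum of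
`ℓ₊(g) + ℓ₋(g) + |m - Γ(g)|` over `g ∈ [-1, 1]` is exactly `Ψ(m)`. Choosing every `gⱼ` as such
a minimiser gives weak duality. Strong duality, up to any `η > 0`, comes from Lagrange multipliers
for the linear program, found by strictly separating the compact image of the cube under
`z ↦ (constraints, objective)` from a translated closed orthant; thanks to the slack `η`, a
feasible point is enough and no Slater point is needed. Monotonicity of `ℓ₊` and `ℓ₋` bounds all
losses, so the `sSup` and `sInf` involved are genuine suprema and infima.
-/

open Set

theorem csInf_eq_csInf_of_forall_exists_le_of_lt_add {s t : Set ℝ} (ht : t.Nonempty)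
    (hs : BddBelow s) (hts : ∀ y ∈ t, ∃ x ∈ s, x ≤ y) (hst : ∀ x ∈ s, ∀ ε > 0, ∃ y ∈ t, y < x + ε) :
    sInf s = sInf t := by
  have hs_ne : s.Nonempty := let ⟨y, hy⟩ := ht; let ⟨x, hx, _⟩ := hts y hy; ⟨x, hx⟩
  refine le_antisymm (le_csInf ht fun y hy => ?_) (le_csInf hs_ne fun x hx => ?_)
  · obtain ⟨x, hx, hxy⟩ := hts y hy
    exact (csInf_le hs hx).trans hxy
  · have ht_bdd : BddBelow t := by
      obtain ⟨c, hc⟩ := hs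
      exact ⟨c, fun y hy => let ⟨x, hx, hxy⟩ := hts y hy; (hc hx).trans hxy⟩
    refine le_of_forall_pos_lt_add fun ε hε => ?_
    obtain ⟨y, hy, hyx⟩ := hst x hx ε hε
    exact (csInf_le ht_bdd hy).trans_lt hyx

theorem isGreatest_mul_image_Icc (d : ℝ) : IsGreatest ((d * ·) '' Icc (-1) 1) |d| := by
  refine ⟨?_, ?_⟩
  · rcases le_total 0 d with hd | hd
    · exact ⟨1, by norm_num, by simp [abs_of_nonneg hd]⟩
    · exact ⟨-1, by norm_num, by simp [abs_of_nonpos hd]⟩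
  · rintro _ ⟨z, hz, rfl⟩
    calc d * z ≤ |d * z| := le_abs_self _
      _ = |d| * |z| := abs_mul d z
      _ ≤ |d| * 1 := mul_le_mul_of_nonneg_left (abs_le.2 hz) (abs_nonneg d)
      _ = |d| := mul_one _

theorem exists_lagrangeMultipliers_lt {ι E : Type*} [Fintype ι] [AddCommGroup E] [Module ℝ E]
    [TopologicalSpace E] {K : Set E} (hKconv : Convex ℝ K) (hK : IsCompact K)
    (Φ : E →L[ℝ] ι → ℝ) (ψ : E →L[ℝ] ℝ) (b : ι → ℝ) {v w : ℝ}
    (hfeas : ∃ z ∈ K, b ≤ Φ z) (hv : ∀ z ∈ K, b ≤ Φ z → ψ z ≤ v) (hvw : v < w) :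
    ∃ σ : ι → ℝ, 0 ≤ σ ∧ ∀ z ∈ K, ψ z + σ ⬝ᵥ (Φ z - b) < w := by
  classical
  have hdisj : Disjoint (Φ.prod ψ '' K) (Ici (b, w)) := by
    refine Set.disjoint_left.2 ?_
    rintro _ ⟨z, hz, rfl⟩ hbw
    obtain ⟨hb, hw⟩ := Prod.mk_le_mk.1 hbw
    exact (hv z hz hb).not_gt (hvw.trans_le hw)
  obtain ⟨f, s, t, hfK, hst, hfQ⟩ := geometric_hahn_banach_compact_closed
    (hKconv.linear_image (Φ.prod ψ).toLinearMap) (hK.image (Φ.prod ψ).continuous)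
    (convex_Ici (b, w)) isClosed_Ici hdisj
  -- `f` is bounded below on the cone `Ici (b, w)`, hence nonnegative on its directions.
  have hf_nonneg : ∀ d, 0 ≤ d → 0 ≤ f d := by
    intro d hd
    have hray : ∀ r : ℝ, 0 ≤ r → t < f (b, w) + r * f d := fun r hr => by
      simpa using hfQ _ (le_add_of_nonneg_right (smul_nonneg hr hd))
    by_contra! hfd
    have hr := hray ((f (b, w) - t) / -f d) (div_nonneg (by linarith [hray 0 le_rfl]) (by linarith))
    have hcancel : (f (b, w) - t) / -f d * f d = t - f (b, w) := by
      rw [div_neg, neg_mul, div_mul_cancel₀ _ hfd.ne, neg_sub]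
    linarith
  set μ : ι → ℝ := fun i => f (fun j => if i = j then 1 else 0, 0)
  set τ := f (0, 1)
  have hf : ∀ u r, f (u, r) = μ ⬝ᵥ u + τ * r := by
    intro u r
    have hsplit : f (u, r) = f (u, 0) + r * τ := by
      rw [← smul_eq_mul, ← map_smul, ← map_add, Prod.smul_mk, smul_zero, smul_eq_mul, mul_one,
        Prod.mk_add_mk, add_zero, zero_add]
    have hpi := LinearMap.pi_apply_eq_sum_univ
      (f.comp (ContinuousLinearMap.inl ℝ (ι → ℝ) ℝ)).toLinearMap u
    simp only [ContinuousLinearMap.coe_coe, ContinuousLinearMap.coe_comp, Function.comp_apply,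
      ContinuousLinearMap.inl_apply, smul_eq_mul] at hpi
    rw [hsplit, hpi, dotProduct]
    simp only [μ, mul_comm]
  obtain ⟨z₀, hz₀, hbz₀⟩ := hfeas
  -- `f` separates `(Φ z₀, ψ z₀)` from `(Φ z₀, w)`, which differ only in the last coordinate.
  have hτ : 0 < τ := by
    have hlt := (hfK _ ⟨z₀, hz₀, rfl⟩).trans
      (hst.trans (hfQ (Φ z₀, w) (Prod.mk_le_mk.2 ⟨hbz₀, le_rfl⟩)))
    simp only [ContinuousLinearMap.coe_coe, ContinuousLinearMap.prod_apply, hf] at hlt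
    refine (hf_nonneg (0, 1) ⟨le_rfl, zero_le_one⟩ |>.lt_of_ne ?_)
    rintro h
    simp [← h, τ] at hlt
  refine ⟨τ⁻¹ • μ, smul_nonneg (inv_nonneg.2 hτ.le) fun i => hf_nonneg _ ⟨fun j => ?_, le_rfl⟩,
    fun z hz => ?_⟩
  · simp only [Prod.fst_zero, Pi.zero_apply]; split_ifs <;> norm_num
  have hlt := (hfK _ ⟨z, hz, rfl⟩).trans (hst.trans (hfQ (b, w) self_mem_Ici))
  simp only [ContinuousLinearMap.coe_coe, ContinuousLinearMap.prod_apply, hf] at hlt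
  rw [smul_dotProduct, dotProduct_sub, smul_eq_mul, ← mul_lt_mul_iff_right₀ hτ]
  field_simp
  linarith

theorem isLeast_Psi {lp lm Γinv : ℝ → ℝ} (hlp : AntitoneOn lp (Icc (-1) 1))
    (hlm : MonotoneOn lm (Icc (-1) 1))
    (hΓinv_mem : ∀ m ∈ Icc (lm (-1) - lp (-1)) (lm 1 - lp 1), Γinv m ∈ Icc (-1 : ℝ) 1)
    (hΓinv : ∀ m ∈ Icc (lm (-1) - lp (-1)) (lm 1 - lp 1), lm (Γinv m) - lp (Γinv m) = m)
    (m : ℝ) :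
    IsLeast ((fun g => lp g + lm g + |m - (lm g - lp g)|) '' Icc (-1) 1) (Psi lp lm Γinv m) := by
  have hneg : (-1 : ℝ) ∈ Icc (-1) 1 := by norm_num
  have hpos : (1 : ℝ) ∈ Icc (-1) 1 := by norm_num
  unfold Psi
  split_ifs with hlow hhigh
  · refine ⟨⟨-1, hneg, ?_⟩, ?_⟩
    · dsimp only; rw [abs_of_nonpos (by linarith)]; ring
    · rintro _ ⟨g, hg, rfl⟩
      dsimp only
      linarith [hlm hneg hg hg.1, neg_abs_le (m - (lm g - lp g))]
  · have hm : m ∈ Icc (lm (-1) - lp (-1)) (lm 1 - lp 1) := ⟨(not_le.1 hlow).le, hhigh.le⟩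
    refine ⟨⟨Γinv m, hΓinv_mem m hm, by simp [hΓinv m hm]⟩, ?_⟩
    rintro _ ⟨g, hg, rfl⟩
    dsimp only
    have hgm := hΓinv_mem m hm
    rcases le_total g (Γinv m) with hle | hle
    · linarith [hlp hg hgm hle, hΓinv m hm, le_abs_self (m - (lm g - lp g))]
    · linarith [hlm hgm hg hle, hΓinv m hm, neg_abs_le (m - (lm g - lp g))]
  · refine ⟨⟨1, hpos, ?_⟩, ?_⟩
    · dsimp only; rw [abs_of_nonneg (by linarith)]; ring
    · rintro _ ⟨g, hg, rfl⟩
      dsimp only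
      linarith [hlp hg hpos hg.2, le_abs_self (m - (lm g - lp g))]

theorem two_mul_lossV (lp lm : ℝ → ℝ) (n : ℕ) (z g : Fin n → ℝ) :
    2 * lossV lp lm n z g = 1 / (n : ℝ) * ∑ j, (lp (g j) + lm (g j)) -
      1 / (n : ℝ) * ∑ j, (lm (g j) - lp (g j)) * z j := by
  rw [lossV, ← mul_sub, ← Finset.sum_sub_distrib, ← mul_assoc, mul_comm 2, mul_assoc,
    Finset.mul_sum]
  exact congrArg _ (Finset.sum_congr rfl fun j _ => by ring)

theorem lossV_mem_Icc {lp lm : ℝ → ℝ} {n : ℕ} (hn : 0 < n) (hlp : AntitoneOn lp (Icc (-1) 1))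
    (hlm : MonotoneOn lm (Icc (-1) 1)) {z g : Fin n → ℝ} (hz : ∀ j, z j ∈ Icc (-1 : ℝ) 1)
    (hg : ∀ j, g j ∈ Icc (-1 : ℝ) 1) :
    lossV lp lm n z g ∈ Icc (min (lp 1) (lm (-1))) (max (lp (-1)) (lm 1)) := by
  have hneg : (-1 : ℝ) ∈ Icc (-1) 1 := by norm_num
  have hpos : (1 : ℝ) ∈ Icc (-1) 1 := by norm_num
  -- each summand is a convex combination of `lp (g j)` and `lm (g j)`
  have hterm : ∀ j, (1 + z j) / 2 * lp (g j) + (1 - z j) / 2 * lm (g j) ∈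
      Icc (min (lp 1) (lm (-1))) (max (lp (-1)) (lm 1)) := by
    intro j
    obtain ⟨hz₁, hz₂⟩ := hz j
    have hlp₁ := hlp (hg j) hpos (hg j).2
    have hlp₂ := hlp hneg (hg j) (hg j).1
    have hlm₁ := hlm hneg (hg j) (hg j).1
    have hlm₂ := hlm (hg j) hpos (hg j).2
    constructor
    · nlinarith [min_le_left (lp 1) (lm (-1)), min_le_right (lp 1) (lm (-1))]
    · nlinarith [le_max_left (lp (-1)) (lm 1), le_max_right (lp (-1)) (lm 1)]
  have hn' : (0 : ℝ) < n := Nat.cast_pos.2 hn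
  have hmean : ∀ c : ℝ, 1 / (n : ℝ) * ∑ _j : Fin n, c = c := fun c => by
    rw [Finset.sum_const, Finset.card_univ, Fintype.card_fin, nsmul_eq_mul]
    field_simp
  constructor
  · calc min (lp 1) (lm (-1)) = 1 / (n : ℝ) * ∑ _j : Fin n, min (lp 1) (lm (-1)) := (hmean _).symm
      _ ≤ lossV lp lm n z g := by
        unfold lossV; gcongr with j; exact (hterm j).1
  · calc lossV lp lm n z g ≤ 1 / (n : ℝ) * ∑ _j : Fin n, max (lp (-1)) (lm 1) := by
          unfold lossV; gcongr with j; exact (hterm j).2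
      _ = max (lp (-1)) (lm 1) := hmean _

theorem lagrangian_eq {p n : ℕ} (lp lm : ℝ → ℝ) (F : Fin p → Fin n → ℝ) (eps σ : Fin p → ℝ)
    (z g : Fin n → ℝ) :
    2 * lossV lp lm n z g + ∑ i, σ i * (2 * eps i - 2 * lossV lp lm n z (F i)) =
      -(∑ i, ((1 / (n : ℝ)) * (∑ j, (lp (F i j) + lm (F i j))) - 2 * eps i) * σ i) +
        1 / (n : ℝ) * ∑ j, (lp (g j) + lm (g j) +
          ((∑ i, σ i * (lm (F i j) - lp (F i j))) - (lm (g j) - lp (g j))) * z j) := by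
  have hswap : ∑ i, σ i * (1 / (n : ℝ) * ∑ j, (lm (F i j) - lp (F i j)) * z j) =
      1 / (n : ℝ) * ∑ j, (∑ i, σ i * (lm (F i j) - lp (F i j))) * z j := by
    simp only [Finset.mul_sum, Finset.sum_mul]
    rw [Finset.sum_comm]
    exact Finset.sum_congr rfl fun j _ => Finset.sum_congr rfl fun i _ => by ring
  have hconstr : ∑ i, σ i * (2 * eps i - 2 * lossV lp lm n z (F i)) =
      -(∑ i, ((1 / (n : ℝ)) * (∑ j, (lp (F i j) + lm (F i j))) - 2 * eps i) * σ i) +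
        ∑ i, σ i * (1 / (n : ℝ) * ∑ j, (lm (F i j) - lp (F i j)) * z j) := by
    rw [← Finset.sum_neg_distrib, ← Finset.sum_add_distrib]
    exact Finset.sum_congr rfl fun i _ => by rw [two_mul_lossV]; ring
  rw [hconstr, hswap, two_mul_lossV]
  simp only [sub_mul, Finset.sum_add_distrib, Finset.sum_sub_distrib]
  ring

noncomputable def feasibleSet (lp lm : ℝ → ℝ) {p n : ℕ} (F : Fin p → Fin n → ℝ)
    (eps : Fin p → ℝ) : Set (Fin n → ℝ) :=
  {z | (∀ j, z j ∈ Icc (-1 : ℝ) 1) ∧ ∀ i, lossV lp lm n z (F i) ≤ eps i}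

noncomputable def worstCaseLoss (lp lm : ℝ → ℝ) {p n : ℕ} (F : Fin p → Fin n → ℝ)
    (eps : Fin p → ℝ) (g : Fin n → ℝ) : ℝ :=
  sSup {w | ∃ z ∈ feasibleSet lp lm F eps, w = lossV lp lm n z g}

noncomputable def dualObjective (lp lm Γinv : ℝ → ℝ) {p n : ℕ} (F : Fin p → Fin n → ℝ)
    (eps σ : Fin p → ℝ) : ℝ :=
  -(∑ i, ((1 / (n : ℝ)) * (∑ j, (lp (F i j) + lm (F i j))) - 2 * eps i) * σ i) +
    (1 / (n : ℝ)) * ∑ j, Psi lp lm Γinv (∑ i, σ i * (lm (F i j) - lp (F i j)))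

section Duality

variable {lp lm Γinv : ℝ → ℝ} {p n : ℕ} {F : Fin p → Fin n → ℝ} {eps : Fin p → ℝ}

theorem lossV_le_worstCaseLoss (hn : 0 < n) (hlp : AntitoneOn lp (Icc (-1) 1))
    (hlm : MonotoneOn lm (Icc (-1) 1)) {g z : Fin n → ℝ} (hg : ∀ j, g j ∈ Icc (-1 : ℝ) 1)
    (hz : z ∈ feasibleSet lp lm F eps) : lossV lp lm n z g ≤ worstCaseLoss lp lm F eps g := by
  refine le_csSup ⟨max (lp (-1)) (lm 1), ?_⟩ ⟨z, hz, rfl⟩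
  rintro _ ⟨z', hz', rfl⟩
  exact (lossV_mem_Icc hn hlp hlm hz'.1 hg).2

theorem worstCaseLoss_le (hZ : (feasibleSet lp lm F eps).Nonempty) {g : Fin n → ℝ} {v : ℝ}
    (h : ∀ z ∈ feasibleSet lp lm F eps, lossV lp lm n z g ≤ v) :
    worstCaseLoss lp lm F eps g ≤ v := by
  obtain ⟨z₀, hz₀⟩ := hZ
  refine csSup_le ⟨_, z₀, hz₀, rfl⟩ ?_
  rintro _ ⟨z, hz, rfl⟩
  exact h z hz

theorem exists_two_mul_worstCaseLoss_le_dualObjective (hlp : AntitoneOn lp (Icc (-1) 1))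
    (hlm : MonotoneOn lm (Icc (-1) 1))
    (hΓinv_mem : ∀ m ∈ Icc (lm (-1) - lp (-1)) (lm 1 - lp 1), Γinv m ∈ Icc (-1 : ℝ) 1)
    (hΓinv : ∀ m ∈ Icc (lm (-1) - lp (-1)) (lm 1 - lp 1), lm (Γinv m) - lp (Γinv m) = m)
    (hZ : (feasibleSet lp lm F eps).Nonempty)
    {σ : Fin p → ℝ} (hσ : ∀ i, 0 ≤ σ i) :
    ∃ g : Fin n → ℝ, (∀ j, g j ∈ Icc (-1 : ℝ) 1) ∧
      2 * worstCaseLoss lp lm F eps g ≤ dualObjective lp lm Γinv F eps σ := by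
  choose g hg hPsi using fun j =>
    (isLeast_Psi hlp hlm hΓinv_mem hΓinv (∑ i, σ i * (lm (F i j) - lp (F i j)))).1
  refine ⟨g, hg, ?_⟩
  suffices h : ∀ z ∈ feasibleSet lp lm F eps,
      2 * lossV lp lm n z g ≤ dualObjective lp lm Γinv F eps σ by
    linarith [worstCaseLoss_le hZ fun z hz => (le_div_iff₀' two_pos).2 (h z hz)]
  intro z hz
  calc 2 * lossV lp lm n z g
      ≤ 2 * lossV lp lm n z g + ∑ i, σ i * (2 * eps i - 2 * lossV lp lm n z (F i)) :=
        le_add_of_nonneg_right <|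
          Finset.sum_nonneg fun i _ => mul_nonneg (hσ i) (by linarith [hz.2 i])
    _ = _ := lagrangian_eq lp lm F eps σ z g
    _ ≤ dualObjective lp lm Γinv F eps σ := by
        unfold dualObjective
        gcongr with j
        rw [← hPsi j]
        dsimp only
        gcongr
        exact (isGreatest_mul_image_Icc _).2 ⟨z j, hz.1 j, rfl⟩

theorem exists_dualObjective_lt (hn : 0 < n) (hlp : AntitoneOn lp (Icc (-1) 1))
    (hlm : MonotoneOn lm (Icc (-1) 1))
    (hΓinv_mem : ∀ m ∈ Icc (lm (-1) - lp (-1)) (lm 1 - lp 1), Γinv m ∈ Icc (-1 : ℝ) 1)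
    (hΓinv : ∀ m ∈ Icc (lm (-1) - lp (-1)) (lm 1 - lp 1), lm (Γinv m) - lp (Γinv m) = m)
    (hZ : (feasibleSet lp lm F eps).Nonempty)
    {g : Fin n → ℝ} (hg : ∀ j, g j ∈ Icc (-1 : ℝ) 1) {η : ℝ} (hη : 0 < η) :
    ∃ σ : Fin p → ℝ, (∀ i, 0 ≤ σ i) ∧
      dualObjective lp lm Γinv F eps σ < 2 * worstCaseLoss lp lm F eps g + η := by
  set S := 1 / (n : ℝ) * ∑ j, (lp (g j) + lm (g j))
  set b : Fin p → ℝ := fun i => 1 / (n : ℝ) * ∑ j, (lp (F i j) + lm (F i j)) - 2 * eps i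
  let Φ : (Fin n → ℝ) →L[ℝ] Fin p → ℝ := LinearMap.toContinuousLinearMap
    (Matrix.mulVecLin (Matrix.of fun i j => 1 / (n : ℝ) * (lm (F i j) - lp (F i j))))
  let ψ : (Fin n → ℝ) →L[ℝ] ℝ := LinearMap.toContinuousLinearMap
    (dotProductBilin ℝ ℝ (fun j => -(1 / (n : ℝ)) * (lm (g j) - lp (g j))))
  have hψ : ∀ z, ψ z = 2 * lossV lp lm n z g - S := by
    intro z
    simp only [ψ, S, LinearMap.coe_toContinuousLinearMap', dotProductBilin_apply_apply,
      two_mul_lossV, sub_sub_cancel_left]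
    rw [dotProduct, Finset.mul_sum, ← Finset.sum_neg_distrib]
    exact Finset.sum_congr rfl fun j _ => by ring
  have hΦ : ∀ z i, Φ z i - b i = 2 * eps i - 2 * lossV lp lm n z (F i) := by
    intro z i
    simp only [Φ, b, LinearMap.coe_toContinuousLinearMap', Matrix.mulVecBilin_apply, Matrix.mulVec,
      dotProduct, Matrix.of_apply, two_mul_lossV, Finset.mul_sum, mul_assoc]
    ring
  have hfeas : ∀ z : Fin n → ℝ, z ∈ feasibleSet lp lm F eps ↔
      z ∈ univ.pi (fun _ => Icc (-1 : ℝ) 1) ∧ b ≤ Φ z := by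
    intro z
    simp only [feasibleSet, mem_ofPred_eq, mem_univ_pi, Pi.le_def]
    refine and_congr_right' (forall_congr' fun i => ?_)
    constructor <;> intro h <;> linarith [hΦ z i]
  obtain ⟨σ, hσ, hlt⟩ := exists_lagrangeMultipliers_lt
    (convex_pi fun _ _ => convex_Icc (-1 : ℝ) 1) (isCompact_univ_pi fun _ => isCompact_Icc) Φ ψ b
    (v := 2 * worstCaseLoss lp lm F eps g - S) (w := 2 * worstCaseLoss lp lm F eps g - S + η)
    (let ⟨z, hz⟩ := hZ; ⟨z, (hfeas z).1 hz⟩)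
    (fun z hz hbz => by
      rw [hψ]
      linarith [lossV_le_worstCaseLoss hn hlp hlm hg ((hfeas z).2 ⟨hz, hbz⟩)])
    (by linarith)
  refine ⟨σ, hσ, ?_⟩
  choose z hz hzabs using fun j => (isGreatest_mul_image_Icc
    ((∑ i, σ i * (lm (F i j) - lp (F i j))) - (lm (g j) - lp (g j)))).1
  beta_reduce at hzabs
  calc dualObjective lp lm Γinv F eps σ
      ≤ -(∑ i, ((1 / (n : ℝ)) * (∑ j, (lp (F i j) + lm (F i j))) - 2 * eps i) * σ i) +
        1 / (n : ℝ) * ∑ j, (lp (g j) + lm (g j) +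
          ((∑ i, σ i * (lm (F i j) - lp (F i j))) - (lm (g j) - lp (g j))) * z j) := by
        unfold dualObjective
        gcongr with j
        rw [hzabs j]
        exact (isLeast_Psi hlp hlm hΓinv_mem hΓinv _).2 ⟨g j, hg j, rfl⟩
    _ = ψ z + σ ⬝ᵥ (Φ z - b) + S := by
        rw [← lagrangian_eq, hψ, dotProduct]
        simp only [Pi.sub_apply, hΦ]
        ring
    _ < 2 * worstCaseLoss lp lm F eps g + η := by
        linarith [hlt z (mem_univ_pi.2 hz)]

end Duality

theorem stmt_13_general (p n : ℕ) (hn : 0 < n)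
    (F : Fin p → Fin n → ℝ)
    (lp lm Γinv : ℝ → ℝ)
    (hlpm : AntitoneOn lp (Set.Icc (-1) 1))
    (hlmm : MonotoneOn lm (Set.Icc (-1) 1))
    (hGinvMem : ∀ m ∈ Set.Icc (lm (-1) - lp (-1)) (lm 1 - lp 1), Γinv m ∈ Set.Icc (-1:ℝ) 1)
    (hGinvRight : ∀ m ∈ Set.Icc (lm (-1) - lp (-1)) (lm 1 - lp 1), lm (Γinv m) - lp (Γinv m) = m)
    (eps : Fin p → ℝ)
    (hZ : {z : Fin n → ℝ | (∀ j, z j ∈ Set.Icc (-1:ℝ) 1) ∧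
      ∀ i, lossV lp lm n z (F i) ≤ eps i}.Nonempty) :
    sInf {v : ℝ | ∃ g : Fin n → ℝ, (∀ j, g j ∈ Set.Icc (-1:ℝ) 1) ∧
        v = sSup {w : ℝ | ∃ z ∈ {z : Fin n → ℝ | (∀ j, z j ∈ Set.Icc (-1:ℝ) 1) ∧
          ∀ i, lossV lp lm n z (F i) ≤ eps i}, w = lossV lp lm n z g}} =
      (1 / 2) * sInf {v : ℝ | ∃ σ : Fin p → ℝ, (∀ i, 0 ≤ σ i) ∧
        v = -(∑ i, ((1 / (n : ℝ)) * (∑ j, (lp (F i j) + lm (F i j))) - 2 * eps i) * σ i) +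
          (1 / (n : ℝ)) * ∑ j, Psi lp lm Γinv (∑ i, σ i * (lm (F i j) - lp (F i j)))} := by
  change (feasibleSet lp lm F eps).Nonempty at hZ
  change sInf {v | ∃ g : Fin n → ℝ, (∀ j, g j ∈ Icc (-1 : ℝ) 1) ∧
      v = worstCaseLoss lp lm F eps g} =
    1 / 2 * sInf {v | ∃ σ : Fin p → ℝ, (∀ i, 0 ≤ σ i) ∧ v = dualObjective lp lm Γinv F eps σ}
  rw [← smul_eq_mul, ← Real.sInf_smul_of_nonneg (by norm_num : (0 : ℝ) ≤ 1 / 2)]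
  obtain ⟨z₀, hz₀⟩ := hZ
  refine csInf_eq_csInf_of_forall_exists_le_of_lt_add
    (Set.Nonempty.smul_set ⟨_, 0, fun _ => le_rfl, rfl⟩) ⟨min (lp 1) (lm (-1)), ?_⟩ ?_ ?_
  · rintro _ ⟨g, hg, rfl⟩
    exact (lossV_mem_Icc hn hlpm hlmm hz₀.1 hg).1.trans
      (lossV_le_worstCaseLoss hn hlpm hlmm hg hz₀)
  · rintro _ ⟨_, ⟨σ, hσ, rfl⟩, rfl⟩
    obtain ⟨g, hg, hle⟩ := exists_two_mul_worstCaseLoss_le_dualObjective hlpm hlmm hGinvMem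
      hGinvRight ⟨z₀, hz₀⟩ hσ
    exact ⟨_, ⟨g, hg, rfl⟩, by simp only [smul_eq_mul]; linarith⟩
  · rintro _ ⟨g, hg, rfl⟩ ε hε
    obtain ⟨σ, hσ, hlt⟩ := exists_dualObjective_lt hn hlpm hlmm hGinvMem hGinvRight ⟨z₀, hz₀⟩ hg
      (mul_pos two_pos hε)
    exact ⟨_, ⟨_, ⟨σ, hσ, rfl⟩, rfl⟩, by simp only [smul_eq_mul]; linarith⟩

theorem stmt_13 (p n : ℕ) (hp : 0 < p) (hn : 0 < n)
    (F : Fin p → Fin n → ℝ) (hF : ∀ i j, F i j ∈ Set.Icc (-1:ℝ) 1)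
    (lp lm lp' lm' lp'' lm'' Γinv : ℝ → ℝ)
    (hlpc : ContinuousOn lp (Set.Icc (-1) 1))
    (hlmc : ContinuousOn lm (Set.Icc (-1) 1))
    (hlpd : ∀ x ∈ Set.Ioo (-1:ℝ) 1, HasDerivAt lp (lp' x) x)
    (hlmd : ∀ x ∈ Set.Ioo (-1:ℝ) 1, HasDerivAt lm (lm' x) x)
    (hlpd2 : ∀ x ∈ Set.Ioo (-1:ℝ) 1, HasDerivAt lp' (lp'' x) x)
    (hlmd2 : ∀ x ∈ Set.Ioo (-1:ℝ) 1, HasDerivAt lm' (lm'' x) x)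
    (hlpm : AntitoneOn lp (Set.Icc (-1) 1))
    (hlmm : MonotoneOn lm (Set.Icc (-1) 1))
    (hslope : ∀ x ∈ Set.Ioo (-1:ℝ) 1, 0 < lm' x - lp' x)
    (hGinvMem : ∀ m ∈ Set.Icc (lm (-1) - lp (-1)) (lm 1 - lp 1), Γinv m ∈ Set.Icc (-1:ℝ) 1)
    (hGinvRight : ∀ m ∈ Set.Icc (lm (-1) - lp (-1)) (lm 1 - lp 1), lm (Γinv m) - lp (Γinv m) = m)
    (hGinvLeft : ∀ g ∈ Set.Icc (-1:ℝ) 1, Γinv (lm g - lp g) = g)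
    (eps : Fin p → ℝ)
    (hZ : {z : Fin n → ℝ | (∀ j, z j ∈ Set.Icc (-1:ℝ) 1) ∧
      ∀ i, lossV lp lm n z (F i) ≤ eps i}.Nonempty) :
    sInf {v : ℝ | ∃ g : Fin n → ℝ, (∀ j, g j ∈ Set.Icc (-1:ℝ) 1) ∧
        v = sSup {w : ℝ | ∃ z ∈ {z : Fin n → ℝ | (∀ j, z j ∈ Set.Icc (-1:ℝ) 1) ∧
          ∀ i, lossV lp lm n z (F i) ≤ eps i}, w = lossV lp lm n z g}} =
      (1 / 2) * sInf {v : ℝ | ∃ σ : Fin p → ℝ, (∀ i, 0 ≤ σ i) ∧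
        v = -(∑ i, ((1 / (n : ℝ)) * (∑ j, (lp (F i j) + lm (F i j))) - 2 * eps i) * σ i) +
          (1 / (n : ℝ)) * ∑ j, Psi lp lm Γinv (∑ i, σ i * (lm (F i j) - lp (F i j)))} :=
  stmt_13_general p n hn F lp lm Γinv hlpm hlmm hGinvMem hGinvRight eps hZ
end

section
/- Pointwise inner minimization yields the potential well (key step in the proof of Theorem 2.2): for every m ∈ ℝ, the minimum over g ∈ [−1,1] of [ℓ₊(g) + ℓ₋(g) + |m − Γ(g)|] is attained and equals Ψ(m). -/
open scoped BigOperators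

theorem stmt_15
    (lp lm lp' lm' lp'' lm'' Γinv : ℝ → ℝ)
    (hlpc : ContinuousOn lp (Set.Icc (-1) 1))
    (hlmc : ContinuousOn lm (Set.Icc (-1) 1))
    (hlpd : ∀ x ∈ Set.Ioo (-1:ℝ) 1, HasDerivAt lp (lp' x) x)
    (hlmd : ∀ x ∈ Set.Ioo (-1:ℝ) 1, HasDerivAt lm (lm' x) x)
    (hlpd2 : ∀ x ∈ Set.Ioo (-1:ℝ) 1, HasDerivAt lp' (lp'' x) x)
    (hlmd2 : ∀ x ∈ Set.Ioo (-1:ℝ) 1, HasDerivAt lm' (lm'' x) x)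
    (hlpm : AntitoneOn lp (Set.Icc (-1) 1))
    (hlmm : MonotoneOn lm (Set.Icc (-1) 1))
    (hslope : ∀ x ∈ Set.Ioo (-1:ℝ) 1, 0 < lm' x - lp' x)
    (hGinvMem : ∀ m ∈ Set.Icc (lm (-1) - lp (-1)) (lm 1 - lp 1), Γinv m ∈ Set.Icc (-1:ℝ) 1)
    (hGinvRight : ∀ m ∈ Set.Icc (lm (-1) - lp (-1)) (lm 1 - lp 1), lm (Γinv m) - lp (Γinv m) = m)
    (hGinvLeft : ∀ g ∈ Set.Icc (-1:ℝ) 1, Γinv (lm g - lp g) = g)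
    (m : ℝ) :
    IsLeast {v : ℝ | ∃ g ∈ Set.Icc (-1:ℝ) 1, v = lp g + lm g + |m - (lm g - lp g)|}
      (Psi lp lm Γinv m) := by
  have hm1 : (-1:ℝ) ∈ Set.Icc (-1:ℝ) 1 := by norm_num
  have hp1 : (1:ℝ) ∈ Set.Icc (-1:ℝ) 1 := by norm_num
  constructor
  · -- membership
    unfold Psi
    split_ifs with h1 h2
    · refine ⟨-1, hm1, ?_⟩
      rw [abs_of_nonpos (by linarith)]
      ring
    · have hm : m ∈ Set.Icc (lm (-1) - lp (-1)) (lm 1 - lp 1) :=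
        ⟨le_of_lt (not_le.mp h1), le_of_lt h2⟩
      refine ⟨Γinv m, hGinvMem m hm, ?_⟩
      rw [hGinvRight m hm]
      simp
    · refine ⟨1, hp1, ?_⟩
      rw [abs_of_nonneg (by push_neg at h2; linarith)]
      ring
  · rintro v ⟨g, hg, rfl⟩
    have hlm1 : lm (-1) ≤ lm g := hlmm hm1 hg hg.1
    have hlp1 : lp 1 ≤ lp g := hlpm hg hp1 hg.2
    have habs1 : m - (lm g - lp g) ≤ |m - (lm g - lp g)| := le_abs_self _
    have habs2 : -(m - (lm g - lp g)) ≤ |m - (lm g - lp g)| := neg_le_abs _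
    unfold Psi
    split_ifs with h1 h2
    · linarith
    · have hm : m ∈ Set.Icc (lm (-1) - lp (-1)) (lm 1 - lp 1) :=
        ⟨le_of_lt (not_le.mp h1), le_of_lt h2⟩
      have hgs := hGinvMem m hm
      have hΓs := hGinvRight m hm
      rcases le_total g (Γinv m) with hle | hle
      · have : lp (Γinv m) ≤ lp g := hlpm hg hgs hle
        linarith
      · have : lm (Γinv m) ≤ lm g := hlmm hgs hg hle
        linarith
    · linarith
end

section
/- Weighted pointwise inner minimization (key step in the proof of Theorem 3.1): for every m ∈ ℝ and every real r > 0, the minimum over g ∈ [−1,1] of [r·(ℓ₊(g) + ℓ₋(g)) + |m − r·Γ(g)|] is attained and equals r·Ψ(m/r). -/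
open scoped BigOperators

theorem stmt_16
    (lp lm lp' lm' lp'' lm'' Γinv : ℝ → ℝ)
    (hlpc : ContinuousOn lp (Set.Icc (-1) 1))
    (hlmc : ContinuousOn lm (Set.Icc (-1) 1))
    (hlpd : ∀ x ∈ Set.Ioo (-1:ℝ) 1, HasDerivAt lp (lp' x) x)
    (hlmd : ∀ x ∈ Set.Ioo (-1:ℝ) 1, HasDerivAt lm (lm' x) x)
    (hlpd2 : ∀ x ∈ Set.Ioo (-1:ℝ) 1, HasDerivAt lp' (lp'' x) x)
    (hlmd2 : ∀ x ∈ Set.Ioo (-1:ℝ) 1, HasDerivAt lm' (lm'' x) x)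
    (hlpm : AntitoneOn lp (Set.Icc (-1) 1))
    (hlmm : MonotoneOn lm (Set.Icc (-1) 1))
    (hslope : ∀ x ∈ Set.Ioo (-1:ℝ) 1, 0 < lm' x - lp' x)
    (hGinvMem : ∀ m ∈ Set.Icc (lm (-1) - lp (-1)) (lm 1 - lp 1), Γinv m ∈ Set.Icc (-1:ℝ) 1)
    (hGinvRight : ∀ m ∈ Set.Icc (lm (-1) - lp (-1)) (lm 1 - lp 1), lm (Γinv m) - lp (Γinv m) = m)
    (hGinvLeft : ∀ g ∈ Set.Icc (-1:ℝ) 1, Γinv (lm g - lp g) = g)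
    (m : ℝ) (r : ℝ) (hr : 0 < r) :
    IsLeast {v : ℝ | ∃ g ∈ Set.Icc (-1:ℝ) 1, v = r * (lp g + lm g) + |m - r * (lm g - lp g)|}
      (r * Psi lp lm Γinv (m / r)) := by
  have hm1 : (-1:ℝ) ∈ Set.Icc (-1:ℝ) 1 := by norm_num
  have hp1 : (1:ℝ) ∈ Set.Icc (-1:ℝ) 1 := by norm_num
  have hrm : r * (m / r) = m := by field_simp
  unfold Psi
  by_cases hA : m / r ≤ lm (-1) - lp (-1)
  · rw [if_pos hA]
    have hA' : m ≤ r * (lm (-1) - lp (-1)) := by nlinarith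
    constructor
    · refine ⟨-1, hm1, ?_⟩
      rw [abs_of_nonpos (by linarith)]
      linear_combination -hrm
    · rintro v ⟨g, hg, rfl⟩
      have h1 : lm (-1) ≤ lm g := hlmm hm1 hg hg.1
      have h2 : lp g ≤ lp (-1) := hlpm hm1 hg hg.1
      have h3 : m - r * (lm g - lp g) ≤ 0 := by nlinarith
      rw [abs_of_nonpos h3]
      nlinarith
  · push_neg at hA
    by_cases hB : m / r < lm 1 - lp 1
    · rw [if_neg (not_le.mpr hA), if_pos hB]
      have hmem : m / r ∈ Set.Icc (lm (-1) - lp (-1)) (lm 1 - lp 1) := ⟨hA.le, hB.le⟩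
      set g0 := Γinv (m / r) with hg0
      have hg0mem : g0 ∈ Set.Icc (-1:ℝ) 1 := hGinvMem _ hmem
      have hΓ : lm g0 - lp g0 = m / r := hGinvRight _ hmem
      constructor
      · refine ⟨g0, hg0mem, ?_⟩
        rw [hΓ, hrm, sub_self, abs_zero]
        ring
      · rintro v ⟨g, hg, rfl⟩
        by_cases hgle : g ≤ g0
        · have h1 : lm g ≤ lm g0 := hlmm hg hg0mem hgle
          have h2 : lp g0 ≤ lp g := hlpm hg hg0mem hgle
          have h3 : 0 ≤ m - r * (lm g - lp g) := by nlinarith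
          rw [abs_of_nonneg h3]
          nlinarith
        · push_neg at hgle
          have h1 : lm g0 ≤ lm g := hlmm hg0mem hg hgle.le
          have h2 : lp g ≤ lp g0 := hlpm hg0mem hg hgle.le
          have h3 : m - r * (lm g - lp g) ≤ 0 := by nlinarith
          rw [abs_of_nonpos h3]
          nlinarith
    · rw [if_neg (not_le.mpr hA), if_neg hB]
      push_neg at hB
      have hB' : r * (lm 1 - lp 1) ≤ m := by nlinarith
      constructor
      · refine ⟨1, hp1, ?_⟩
        rw [abs_of_nonneg (by linarith)]
        linear_combination hrm
      · rintro v ⟨g, hg, rfl⟩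
        have h1 : lm g ≤ lm 1 := hlmm hg hp1 hg.2
        have h2 : lp 1 ≤ lp g := hlpm hg hp1 hg.2
        have h3 : 0 ≤ m - r * (lm g - lp g) := by nlinarith
        rw [abs_of_nonneg h3]
        nlinarith
end

section
/- Potential well for the exponential loss (entry of Table 1): for the partial losses ℓ₊(g) = e^{−g} and ℓ₋(g) = e^{g} on [−1,1], and every m ∈ ℝ, the minimum over g ∈ [−1,1] of [e^{g} + e^{−g} + |m − (e^{g} − e^{−g})|] equals √(4 + m²) if |m| ≤ e − e^{−1}, and equals |m| + 2e^{−1} if |m| ≥ e − e^{−1}. -/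
open scoped BigOperators

theorem stmt_17 (m : ℝ) :
    (|m| ≤ Real.exp 1 - Real.exp (-1) →
      IsLeast {v : ℝ | ∃ g ∈ Set.Icc (-1:ℝ) 1,
          v = Real.exp g + Real.exp (-g) + |m - (Real.exp g - Real.exp (-g))|}
        (Real.sqrt (4 + m ^ 2))) ∧
    (Real.exp 1 - Real.exp (-1) ≤ |m| →
      IsLeast {v : ℝ | ∃ g ∈ Set.Icc (-1:ℝ) 1,
          v = Real.exp g + Real.exp (-g) + |m - (Real.exp g - Real.exp (-g))|}
        (|m| + 2 * Real.exp (-1))) := by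
  constructor
  · intro hm
    obtain ⟨hm1, hm2⟩ := abs_le.mp hm
    constructor
    · -- membership: g = arsinh (m/2)
      refine ⟨Real.arsinh (m/2), ⟨?_, ?_⟩, ?_⟩
      · have h : Real.sinh (-1) ≤ m/2 := by
          rw [Real.sinh_neg, Real.sinh_eq]; linarith
        have := Real.arsinh_le_arsinh.mpr h
        rwa [Real.arsinh_sinh] at this
      · have h : m/2 ≤ Real.sinh 1 := by
          rw [Real.sinh_eq]; linarith
        have := Real.arsinh_le_arsinh.mpr h
        rwa [Real.arsinh_sinh] at this
      · set g := Real.arsinh (m/2) with hg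
        have hsinh : Real.sinh g = m/2 := Real.sinh_arsinh _
        have hcosh : Real.cosh g = Real.sqrt (1 + (m/2)^2) := Real.cosh_arsinh _
        have h1 : Real.exp g - Real.exp (-g) = m := by
          have := Real.sinh_eq g
          rw [hsinh] at this; linarith
        have h2 : Real.exp g + Real.exp (-g) = 2 * Real.sqrt (1 + (m/2)^2) := by
          have := Real.cosh_eq g
          rw [hcosh] at this; linarith
        have hsq : Real.sqrt (4 + m^2) = 2 * Real.sqrt (1 + (m/2)^2) := by
          have h := Real.sq_sqrt (show (0:ℝ) ≤ 1 + (m/2)^2 by positivity)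
          rw [show 4 + m^2 = (2 * Real.sqrt (1 + (m/2)^2))^2 by nlinarith [h]]
          exact Real.sqrt_sq (by positivity)
        rw [h1, h2, hsq]; simp
    · rintro v ⟨g, ⟨hg1, hg2⟩, rfl⟩
      set s := Real.exp g - Real.exp (-g) with hs
      have hmul : Real.exp g * Real.exp (-g) = 1 := by
        rw [← Real.exp_add]; simp
      have hpos : (0:ℝ) < Real.exp g + Real.exp (-g) := by positivity
      have hc : Real.exp g + Real.exp (-g) = Real.sqrt (4 + s^2) := by
        rw [show 4 + s^2 = (Real.exp g + Real.exp (-g))^2 by rw [hs]; nlinarith [hmul]]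
        exact (Real.sqrt_sq hpos.le).symm
      have husq : Real.sqrt (4 + s^2) ^ 2 = 4 + s^2 :=
        Real.sq_sqrt (by positivity)
      have hus : |s| ≤ Real.sqrt (4 + s^2) := by
        rw [← Real.sqrt_sq_eq_abs]
        exact Real.sqrt_le_sqrt (by nlinarith)
      have ht : |m| - |s| ≤ |m - s| := abs_sub_abs_le_abs_sub m s
      have ht0 : (0:ℝ) ≤ |m - s| := abs_nonneg _
      have hs0 : (0:ℝ) ≤ |s| := abs_nonneg _
      have hm0 : (0:ℝ) ≤ |m| := abs_nonneg _
      have hmm : m^2 = |m|^2 := (sq_abs m).symm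
      have hss : s^2 = |s|^2 := (sq_abs s).symm
      rw [hc]
      calc Real.sqrt (4 + m^2)
          ≤ Real.sqrt ((Real.sqrt (4 + s^2) + |m - s|)^2) := by
            apply Real.sqrt_le_sqrt
            nlinarith [mul_nonneg (show (0:ℝ) ≤ |s| + |m-s| - |m| by linarith)
                (show (0:ℝ) ≤ |s| + |m-s| + |m| by linarith),
              mul_nonneg (show (0:ℝ) ≤ Real.sqrt (4 + s^2) - |s| by linarith) ht0]
        _ = Real.sqrt (4 + s^2) + |m - s| :=
            Real.sqrt_sq (by positivity)
  · intro hm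
    constructor
    · rcases le_or_gt 0 m with h | h
      · refine ⟨1, by norm_num, ?_⟩
        rw [abs_of_nonneg h] at hm ⊢
        rw [abs_of_nonneg (by norm_num; linarith : (0:ℝ) ≤ m - (Real.exp 1 - Real.exp (-(1:ℝ))))]
        ring
      · refine ⟨-1, by norm_num, ?_⟩
        rw [abs_of_neg h] at hm ⊢
        rw [abs_of_nonpos (by norm_num; linarith : m - (Real.exp (-(1:ℝ)) - Real.exp (-(-1:ℝ))) ≤ 0)]
        norm_num; ring
    · rintro v ⟨g, ⟨hg1, hg2⟩, rfl⟩
      have key : |Real.exp g - Real.exp (-g)| + 2 * Real.exp (-1)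
          ≤ Real.exp g + Real.exp (-g) := by
        rcases le_total 0 g with h | h
        · rw [abs_of_nonneg (by
            have : Real.exp (-g) ≤ Real.exp g := Real.exp_le_exp.mpr (by linarith)
            linarith)]
          have : Real.exp (-1) ≤ Real.exp (-g) := Real.exp_le_exp.mpr (by linarith)
          linarith
        · rw [abs_of_nonpos (by
            have : Real.exp g ≤ Real.exp (-g) := Real.exp_le_exp.mpr (by linarith)
            linarith)]
          have : Real.exp (-1) ≤ Real.exp g := Real.exp_le_exp.mpr (by linarith)
          linarith
      have ht : |m| - |Real.exp g - Real.exp (-g)| ≤ |m - (Real.exp g - Real.exp (-g))| :=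
        abs_sub_abs_le_abs_sub _ _
      linarith
end

section
/- Potential well for the log loss (entry of Table 1): for the partial losses ℓ₊(g) = ln(2/(1+g)) and ℓ₋(g) = ln(2/(1−g)) on (−1,1), and every m ∈ ℝ, the infimum over g ∈ (−1,1) of [ln(2/(1+g)) + ln(2/(1−g)) + |m − ln((1+g)/(1−g))|] equals ln(1 + e^{m}) + ln(1 + e^{−m}), and it is attained at g = (e^{m} − 1)/(e^{m} + 1). -/
open scoped BigOperators

lemma key19 (m s : ℝ) :
    Real.log (1 + Real.exp m) + Real.log (1 + Real.exp (-m)) ≤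
      Real.log (1 + Real.exp s) + Real.log (1 + Real.exp (-s)) + |m - s| := by
  have hA : (0:ℝ) < (1 + Real.exp m) * (1 + Real.exp (-m)) := by positivity
  have hB : (0:ℝ) < (1 + Real.exp s) * (1 + Real.exp (-s)) := by positivity
  have hmm : Real.exp m * Real.exp (-m) = 1 := by rw [← Real.exp_add]; simp
  have hss : Real.exp s * Real.exp (-s) = 1 := by rw [← Real.exp_add]; simp
  have h1 : Real.exp m ≤ Real.exp |m - s| * Real.exp s := by
    rw [← Real.exp_add]; apply Real.exp_le_exp.2
    have := le_abs_self (m - s); linarith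
  have h2 : Real.exp (-m) ≤ Real.exp |m - s| * Real.exp (-s) := by
    rw [← Real.exp_add]; apply Real.exp_le_exp.2
    have := neg_abs_le (m - s); linarith
  have h3 : (1:ℝ) ≤ Real.exp |m - s| := Real.one_le_exp (abs_nonneg _)
  have hle : (1 + Real.exp m) * (1 + Real.exp (-m)) ≤
      Real.exp |m - s| * ((1 + Real.exp s) * (1 + Real.exp (-s))) := by
    nlinarith [Real.exp_pos m, Real.exp_pos (-m), Real.exp_pos s, Real.exp_pos (-s)]
  calc Real.log (1 + Real.exp m) + Real.log (1 + Real.exp (-m))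
      = Real.log ((1 + Real.exp m) * (1 + Real.exp (-m))) := by
        rw [Real.log_mul (by positivity) (by positivity)]
    _ ≤ Real.log (Real.exp |m - s| * ((1 + Real.exp s) * (1 + Real.exp (-s)))) :=
        Real.log_le_log hA hle
    _ = Real.log (1 + Real.exp s) + Real.log (1 + Real.exp (-s)) + |m - s| := by
        rw [Real.log_mul (Real.exp_ne_zero _) (by positivity), Real.log_exp,
          Real.log_mul (by positivity) (by positivity)]; ring

theorem stmt_19 (m : ℝ) :
    (Real.exp m - 1) / (Real.exp m + 1) ∈ Set.Ioo (-1:ℝ) 1 ∧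
    (∀ g ∈ Set.Ioo (-1:ℝ) 1,
      Real.log (1 + Real.exp m) + Real.log (1 + Real.exp (-m)) ≤
        Real.log (2 / (1 + g)) + Real.log (2 / (1 - g)) + |m - Real.log ((1 + g) / (1 - g))|) ∧
    Real.log (2 / (1 + (Real.exp m - 1) / (Real.exp m + 1))) +
        Real.log (2 / (1 - (Real.exp m - 1) / (Real.exp m + 1))) +
        |m - Real.log ((1 + (Real.exp m - 1) / (Real.exp m + 1)) /
          (1 - (Real.exp m - 1) / (Real.exp m + 1)))| =
      Real.log (1 + Real.exp m) + Real.log (1 + Real.exp (-m)) := by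
  have hem : (0:ℝ) < Real.exp m := Real.exp_pos m
  have hden : (0:ℝ) < Real.exp m + 1 := by linarith
  have h1g : 1 + (Real.exp m - 1) / (Real.exp m + 1) = 2 * Real.exp m / (Real.exp m + 1) := by
    field_simp; ring
  have h2g : 1 - (Real.exp m - 1) / (Real.exp m + 1) = 2 / (Real.exp m + 1) := by
    field_simp; ring
  refine ⟨⟨by rw [lt_div_iff₀ hden]; nlinarith, by rw [div_lt_one hden]; linarith⟩, ?_, ?_⟩
  · rintro g ⟨hg1, hg2⟩
    have hp : (0:ℝ) < 1 + g := by linarith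
    have hq : (0:ℝ) < 1 - g := by linarith
    set s := Real.log ((1 + g) / (1 - g)) with hs
    have hes : Real.exp s = (1 + g) / (1 - g) := Real.exp_log (by positivity)
    have hens : Real.exp (-s) = (1 - g) / (1 + g) := by
      rw [Real.exp_neg, hes]; rw [inv_div]
    have e1 : Real.log (2 / (1 - g)) = Real.log (1 + Real.exp s) := by
      rw [hes]; congr 1; field_simp; ring
    have e2 : Real.log (2 / (1 + g)) = Real.log (1 + Real.exp (-s)) := by
      rw [hens]; congr 1; field_simp; ring
    rw [e1, e2]
    have := key19 m s
    linarith
  · have hΓ : Real.log ((1 + (Real.exp m - 1) / (Real.exp m + 1)) /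
        (1 - (Real.exp m - 1) / (Real.exp m + 1))) = m := by
      rw [h1g, h2g]
      have : 2 * Real.exp m / (Real.exp m + 1) / (2 / (Real.exp m + 1)) = Real.exp m := by
        field_simp
      rw [this, Real.log_exp]
    rw [hΓ, sub_self, abs_zero, add_zero, h1g, h2g]
    have e1 : (2:ℝ) / (2 * Real.exp m / (Real.exp m + 1)) = 1 + Real.exp (-m) := by
      rw [Real.exp_neg]
      field_simp
    have e2 : (2:ℝ) / (2 / (Real.exp m + 1)) = 1 + Real.exp m := by
      field_simp; ring
    rw [e1, e2]; ring
end
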